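/- arXiv:1509.01852 — 4 statements merged into one kernel-verified Lean document; each statement's English description precedes it below -/
import Mathlib

section
/- The size of partitions is supermodular: for all partitions P, Q of Fin n, s(P ⊔ Q) + s(P ⊓ Q) ≥ s(P) + s(Q). -/
open scoped BigOperators

/-- The size `s(P)` of a partition `P` of `Fin n`: the number of unordered pairs
`{i,j}` of distinct elements of `Fin n` that are `P`-equivalent (counted as
ordered pairs `(i,j)` with `i < j`). -/
noncomputable def partSize (n : ℕ) (P : Setoid (Fin n)) : ℕ :=
  Set.ncard {p : Fin n × Fin n | p.1 < p.2 ∧ P.r p.1 p.2}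

/-!
The set of pairs counted by `s(P)` is monotone in `P` and turns `⊓` into `∩`. Inclusion–exclusion
for the sets `A`, `B` counted by `s(P)`, `s(Q)` gives `s(P) + s(Q) = |A ∪ B| + |A ∩ B|`, where
`A ∩ B` is counted by `s(P ⊓ Q)` and `A ∪ B` lies inside the set counted by `s(P ⊔ Q)`.
-/

namespace Setoid

variable {α : Type*} [LT α]

def relatedPairs (r : Setoid α) : Set (α × α) :=
  {p | p.1 < p.2 ∧ r.r p.1 p.2}

theorem relatedPairs_mono : Monotone (relatedPairs : Setoid α → Set (α × α)) :=
  fun _ _ hrs _ ⟨hlt, hr⟩ => ⟨hlt, hrs hr⟩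

theorem relatedPairs_inf (r s : Setoid α) :
    relatedPairs (r ⊓ s) = relatedPairs r ∩ relatedPairs s :=
  Set.ext fun _ =>
    ⟨fun ⟨hlt, hr, hs⟩ => ⟨⟨hlt, hr⟩, hlt, hs⟩, fun ⟨⟨hlt, hr⟩, _, hs⟩ => ⟨hlt, hr, hs⟩⟩

end Setoid

/-- The size of partitions is supermodular:
`s(P ⊔ Q) + s(P ⊓ Q) ≥ s(P) + s(Q)`. -/
theorem partSize_supermodular (n : ℕ) (P Q : Setoid (Fin n)) :
    partSize n P + partSize n Q ≤ partSize n (P ⊔ Q) + partSize n (P ⊓ Q) := by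
  change P.relatedPairs.ncard + Q.relatedPairs.ncard ≤
    (P ⊔ Q).relatedPairs.ncard + (P ⊓ Q).relatedPairs.ncard
  have hunion : P.relatedPairs ∪ Q.relatedPairs ⊆ (P ⊔ Q).relatedPairs :=
    Set.union_subset (Setoid.relatedPairs_mono le_sup_left)
      (Setoid.relatedPairs_mono le_sup_right)
  calc P.relatedPairs.ncard + Q.relatedPairs.ncard
      = (P.relatedPairs ∪ Q.relatedPairs).ncard + (P.relatedPairs ∩ Q.relatedPairs).ncard :=
        (Set.ncard_union_add_ncard_inter _ _).symm
    _ ≤ (P ⊔ Q).relatedPairs.ncard + (P ⊓ Q).relatedPairs.ncard := by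
        rw [Setoid.relatedPairs_inf]
        gcongr
        exact Set.toFinite _
end

section
/- For every partition P of Fin n (n ≥ 1) there exists a complement Q of P (i.e. P ⊓ Q = ⊥ and P ⊔ Q = ⊤) with s(Q) = |P|·(|P|−1)/2, and hence HD(P,Q) = s(P) + |P|·(|P|−1)/2; i.e. the upper bound s(P) + C(|P|,2) on the Hamming distance from P to its complements is always attained. -/
open scoped BigOperators

/-- Hamming distance between partitions: `HD(P,Q) = s(P) + s(Q) - 2 s(P ⊓ Q)`. -/
noncomputable def HD (n : ℕ) (P Q : Setoid (Fin n)) : ℤ :=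
  (partSize n P : ℤ) + (partSize n Q : ℤ) - 2 * (partSize n (P ⊓ Q) : ℤ)

/-- Number of blocks (equivalence classes) of a partition. -/
noncomputable def numBlocks (n : ℕ) (P : Setoid (Fin n)) : ℕ :=
  Nat.card (Quotient P)

/-!
Choose a transversal `T` of `P`, one representative per block, and let `Q` be the partition
whose only non-singleton block is `T`. Since `T` meets every block of `P` exactly once,
`P ⊓ Q = ⊥`, and every element is `P`-related to a point of the single block `T` of `Q`, so
`P ⊔ Q = ⊤`. The pairs inside `Q` are the pairs of `T`, so `s(Q) = C(|P|, 2)`, and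
`HD(P, Q) = s(P) + s(Q)` because `s(⊥) = 0`.
-/

namespace Setoid

variable {α : Type*}

def collapse (s : Set α) : Setoid α where
  r x y := x = y ∨ (x ∈ s ∧ y ∈ s)
  iseqv :=
    { refl := fun _ => Or.inl rfl
      symm := by rintro x y (rfl | ⟨hx, hy⟩) <;> tauto
      trans := by rintro x y z (rfl | ⟨hx, hy⟩) (rfl | ⟨hy', hz⟩) <;> tauto }

theorem collapse_apply {s : Set α} {x y : α} : collapse s x y ↔ x = y ∨ (x ∈ s ∧ y ∈ s) :=
  Iff.rfl

theorem inf_collapse_eq_bot {P : Setoid α} {s : Set α} (hs : s.InjOn (Quotient.mk P)) :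
    P ⊓ collapse s = ⊥ := by
  refine eq_bot_iff.2 (le_def.2 ?_)
  rintro x y ⟨hP, rfl | ⟨hx, hy⟩⟩
  · rfl
  · exact hs hx hy (Quotient.sound hP)

theorem sup_collapse_eq_top {P : Setoid α} {s : Set α} (hs : ∀ x, ∃ y ∈ s, P x y) :
    P ⊔ collapse s = ⊤ := by
  refine eq_top_iff.2 fun x z => ?_
  obtain ⟨y, hy, hxy⟩ := hs x
  obtain ⟨w, hw, hzw⟩ := hs z
  have hP : P ≤ P ⊔ collapse s := le_sup_left
  have hQ : collapse s ≤ P ⊔ collapse s := le_sup_right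
  exact (P ⊔ collapse s).trans (hP hxy)
    ((P ⊔ collapse s).trans (hQ (Or.inr ⟨hy, hw⟩)) (hP (P.symm hzw)))

theorem injOn_mk_range_out (P : Setoid α) :
    (Set.range (Quotient.out : Quotient P → α)).InjOn (Quotient.mk P) := by
  rintro _ ⟨a, rfl⟩ _ ⟨b, rfl⟩ h
  simp only [Quotient.out_eq] at h
  rw [h]

theorem exists_mem_range_out_rel (P : Setoid α) (x : α) :
    ∃ y ∈ Set.range (Quotient.out : Quotient P → α), P x y :=
  ⟨(Quotient.mk P x).out, Set.mem_range_self _, P.symm (Quotient.mk_out x)⟩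

theorem ncard_range_out (P : Setoid α) :
    (Set.range (Quotient.out : Quotient P → α)).ncard = Nat.card (Quotient P) := by
  rw [← Nat.card_coe_set_eq, Nat.card_range_of_injective Quotient.out_injective]

end Setoid

open Setoid

theorem partSize_bot (n : ℕ) : partSize n ⊥ = 0 := by
  rw [partSize, Set.ncard_eq_zero]
  ext p
  simpa using fun hlt (heq : p.1 = p.2) => hlt.ne heq

theorem partSize_collapse (n : ℕ) (s : Set (Fin n)) :
    partSize n (collapse s) = s.ncard.choose 2 := by
  classical
  have hpairs : {p : Fin n × Fin n | p.1 < p.2 ∧ collapse s p.1 p.2}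
      = ↑{p ∈ s.toFinset ×ˢ s.toFinset | p.1 < p.2} := by
    ext p
    simp only [collapse_apply, Set.mem_ofPred_eq, Finset.coe_filter, Finset.mem_product,
      Set.mem_toFinset]
    constructor
    · rintro ⟨hlt, heq | hs⟩
      · exact absurd heq hlt.ne
      · exact ⟨hs, hlt⟩
    · rintro ⟨hs, hlt⟩
      exact ⟨hlt, Or.inr hs⟩
  rw [partSize, hpairs, Set.ncard_coe_finset, Finset.card_product_filter_lt,
    Set.ncard_eq_toFinset_card']

theorem HD_eq_of_inf_eq_bot {n : ℕ} {P Q : Setoid (Fin n)} (h : P ⊓ Q = ⊥) :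
    HD n P Q = partSize n P + partSize n Q := by
  rw [HD, h, partSize_bot]
  ring

theorem HD_complement_upper_bound_attained_general (n : ℕ) (P : Setoid (Fin n)) :
    ∃ Q : Setoid (Fin n), P ⊓ Q = ⊥ ∧ P ⊔ Q = ⊤ ∧
      partSize n Q = numBlocks n P * (numBlocks n P - 1) / 2 ∧
      HD n P Q = (partSize n P : ℤ) + ((numBlocks n P * (numBlocks n P - 1) / 2 : ℕ) : ℤ) := by
  set T := Set.range (Quotient.out : Quotient P → Fin n)
  have hinf : P ⊓ collapse T = ⊥ := inf_collapse_eq_bot (injOn_mk_range_out P)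
  have hsize : partSize n (collapse T) = numBlocks n P * (numBlocks n P - 1) / 2 := by
    rw [partSize_collapse, ncard_range_out, Nat.choose_two_right, numBlocks]
  refine ⟨collapse T, hinf, sup_collapse_eq_top (exists_mem_range_out_rel P), hsize, ?_⟩
  rw [HD_eq_of_inf_eq_bot hinf, hsize]

/-- The upper bound `s(P) + C(|P|,2)` on the Hamming distance from `P` to its
complements is always attained: there is a complement `Q` of `P` with
`s(Q) = |P|(|P|-1)/2`, hence `HD(P,Q) = s(P) + |P|(|P|-1)/2`. -/
theorem HD_complement_upper_bound_attained (n : ℕ) (hn : 1 ≤ n) (P : Setoid (Fin n)) :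
    ∃ Q : Setoid (Fin n), P ⊓ Q = ⊥ ∧ P ⊔ Q = ⊤ ∧
      partSize n Q = numBlocks n P * (numBlocks n P - 1) / 2 ∧
      HD n P Q = (partSize n P : ℤ) + ((numBlocks n P * (numBlocks n P - 1) / 2 : ℕ) : ℤ) :=
  HD_complement_upper_bound_attained_general n P
end

section
/- Let f be a symmetric, strictly order-preserving partition function on Setoid (Fin n). If f is supermodular, then the minimum-f-weight partition distance is δ_f(P,Q) = f(P) + f(Q) − 2·f(P ⊓ Q) for all partitions P, Q; if instead f is submodular, then δ_f(P,Q) = 2·f(P ⊔ Q) − f(P) − f(Q) for all partitions P, Q. -/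
open scoped BigOperators

/-- The Hasse-diagram graph of the partition lattice: `P` and `Q` are adjacent
iff one covers the other. -/
def hasse (n : ℕ) : SimpleGraph (Setoid (Fin n)) where
  Adj P Q := P ⋖ Q ∨ Q ⋖ P
  symm := ⟨fun P Q h => h.symm⟩
  loopless := ⟨fun P h => by cases h with
    | inl h => exact lt_irrefl P h.lt
    | inr h => exact lt_irrefl P h.lt⟩

/-- The weight of an edge `{P,Q}` induced by `f`: `|f(P) - f(Q)|`. -/
noncomputable def eWeight {n : ℕ} (f : Setoid (Fin n) → ℝ) : Sym2 (Setoid (Fin n)) → ℝ :=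
  Sym2.lift ⟨fun P Q => |f P - f Q|, fun P Q => abs_sub_comm (f P) (f Q)⟩

/-- The weight of a walk in the Hasse diagram: the sum of its edge weights. -/
noncomputable def walkWeight {n : ℕ} (f : Setoid (Fin n) → ℝ) {P Q : Setoid (Fin n)}
    (W : (hasse n).Walk P Q) : ℝ :=
  (W.edges.map (eWeight f)).sum

/-- The minimum-`f`-weight distance `δ_f(P,Q)`: the minimum weight of a walk
from `P` to `Q` in the Hasse diagram. -/
noncomputable def deltaW {n : ℕ} (f : Setoid (Fin n) → ℝ) (P Q : Setoid (Fin n)) : ℝ :=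
  sInf {w : ℝ | ∃ W : (hasse n).Walk P Q, walkWeight f W = w}

/-! For monotone `f`, a maximal chain from `A` up to `B` is a walk of weight `f B - f A`, so the
walk `P → P ⊓ Q → Q` has weight `f P + f Q - 2 f (P ⊓ Q)`. No walk is lighter: if `f` is
supermodular, the potential `g R = f R - 2 f (R ⊓ Q)` changes along each edge by at most the
edge weight, since `0 ≤ f (B ⊓ Q) - f (A ⊓ Q) ≤ f B - f A` for `A ≤ B`, so every walk from
`P` to `Q` weighs at least `g P - g Q`, which is the same value. The submodular case is dual,
through `P ⊔ Q` and `g R = 2 f (R ⊔ Q) - f R`. -/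

instance Setoid.instFinite {α : Type*} [Finite α] : Finite (Setoid α) :=
  Finite.of_injective (fun r : Setoid α => r.r) fun _ _ h =>
    Setoid.ext fun x y => by simp only at h; rw [h]

section Modular

variable {α : Type*} [Lattice α] {f : α → ℝ}

theorem Monotone.sub_inf_le_sub_of_supermodular (hf : Monotone f)
    (hsup : ∀ P Q : α, f P + f Q ≤ f (P ⊔ Q) + f (P ⊓ Q)) (Q : α) {A B : α} (hAB : A ≤ B) :
    f (B ⊓ Q) - f (A ⊓ Q) ≤ f B - f A := by
  have h := hsup A (B ⊓ Q)
  rw [← inf_assoc, inf_eq_left.mpr hAB] at h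
  linarith [hf (sup_le hAB (inf_le_left : B ⊓ Q ≤ B))]

theorem Monotone.sub_sup_le_sub_of_submodular (hf : Monotone f)
    (hsub : ∀ P Q : α, f (P ⊔ Q) + f (P ⊓ Q) ≤ f P + f Q) (Q : α) {A B : α} (hAB : A ≤ B) :
    f (B ⊔ Q) - f (A ⊔ Q) ≤ f B - f A := by
  have h := hsub B (A ⊔ Q)
  rw [← sup_assoc, sup_eq_left.mpr hAB] at h
  linarith [hf (le_inf hAB (le_sup_left : A ≤ A ⊔ Q))]

theorem Monotone.abs_sub_two_mul_inf_le_of_supermodular (hf : Monotone f)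
    (hsup : ∀ P Q : α, f P + f Q ≤ f (P ⊔ Q) + f (P ⊓ Q)) (Q : α) {A B : α} (hAB : A ≤ B) :
    |(f B - 2 * f (B ⊓ Q)) - (f A - 2 * f (A ⊓ Q))| ≤ f B - f A := by
  have := hf.sub_inf_le_sub_of_supermodular hsup Q hAB
  have := hf (inf_le_inf_right Q hAB)
  rw [abs_le]
  constructor <;> linarith

theorem Monotone.abs_two_mul_sup_sub_le_of_submodular (hf : Monotone f)
    (hsub : ∀ P Q : α, f (P ⊔ Q) + f (P ⊓ Q) ≤ f P + f Q) (Q : α) {A B : α} (hAB : A ≤ B) :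
    |(2 * f (B ⊔ Q) - f B) - (2 * f (A ⊔ Q) - f A)| ≤ f B - f A := by
  have := hf.sub_sup_le_sub_of_submodular hsub Q hAB
  have := hf (sup_le_sup_right hAB Q)
  rw [abs_le]
  constructor <;> linarith

end Modular

section Walks

variable {n : ℕ} (f : Setoid (Fin n) → ℝ)

@[simp]
theorem walkWeight_nil {P : Setoid (Fin n)} : walkWeight f (.nil : (hasse n).Walk P P) = 0 :=
  rfl

@[simp]
theorem walkWeight_cons {A B C : Setoid (Fin n)} (h : (hasse n).Adj A B) (W : (hasse n).Walk B C) :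
    walkWeight f (.cons h W) = |f A - f B| + walkWeight f W := by
  simp [walkWeight, eWeight]

@[simp]
theorem walkWeight_append {A B C : Setoid (Fin n)} (W₁ : (hasse n).Walk A B)
    (W₂ : (hasse n).Walk B C) : walkWeight f (W₁.append W₂) = walkWeight f W₁ + walkWeight f W₂ := by
  simp [walkWeight]

@[simp]
theorem walkWeight_reverse {A B : Setoid (Fin n)} (W : (hasse n).Walk A B) :
    walkWeight f W.reverse = walkWeight f W := by
  simp [walkWeight, List.sum_reverse]

variable {f}

theorem exists_walk_walkWeight_eq_sub (hf : Monotone f) {A B : Setoid (Fin n)} (hAB : A ≤ B) :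
    ∃ W : (hasse n).Walk B A, walkWeight f W = f B - f A := by
  induction B using WellFoundedLT.induction with
  | ind B ih =>
    rcases hAB.eq_or_lt with rfl | hlt
    · exact ⟨.nil, by simp⟩
    obtain ⟨C, hAC, hCB⟩ := exists_le_covBy_of_lt hlt
    obtain ⟨W, hW⟩ := ih C hCB.lt hAC
    refine ⟨.cons (show (hasse n).Adj B C from Or.inr hCB) W, ?_⟩
    rw [walkWeight_cons, hW, abs_of_nonneg (sub_nonneg.2 (hf hCB.le))]
    ring

theorem abs_sub_le_walkWeight {g : Setoid (Fin n) → ℝ}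
    (hg : ∀ A B : Setoid (Fin n), A ≤ B → |g B - g A| ≤ f B - f A) {P Q : Setoid (Fin n)}
    (W : (hasse n).Walk P Q) : |g P - g Q| ≤ walkWeight f W := by
  induction W with
  | nil => simp
  | @cons A B C h W ih =>
    have hedge : |g A - g B| ≤ |f A - f B| := by
      rcases h with h | h
      · rw [abs_sub_comm (g A), abs_sub_comm (f A)]
        exact (hg A B h.le).trans (le_abs_self _)
      · exact (hg B A h.le).trans (le_abs_self _)
    rw [walkWeight_cons]
    linarith [abs_sub_le (g A) (g B) (g C)]

theorem deltaW_eq_of_walkWeight_eq {g : Setoid (Fin n) → ℝ}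
    (hg : ∀ A B : Setoid (Fin n), A ≤ B → |g B - g A| ≤ f B - f A) {P Q : Setoid (Fin n)}
    (W : (hasse n).Walk P Q) (hW : walkWeight f W = g P - g Q) :
    deltaW f P Q = g P - g Q := by
  have hlb : g P - g Q ∈ lowerBounds {w : ℝ | ∃ W : (hasse n).Walk P Q, walkWeight f W = w} := by
    rintro w ⟨W', rfl⟩
    exact (le_abs_self _).trans (abs_sub_le_walkWeight hg W')
  exact le_antisymm (csInf_le ⟨_, hlb⟩ ⟨W, hW⟩) (le_csInf ⟨_, W, hW⟩ hlb)

end Walks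

theorem deltaW_of_order_preserving_general (n : ℕ) (f : Setoid (Fin n) → ℝ)
    (hmono : ∀ P Q : Setoid (Fin n), P < Q → f P < f Q) :
    ((∀ P Q : Setoid (Fin n), f P + f Q ≤ f (P ⊔ Q) + f (P ⊓ Q)) →
      ∀ P Q : Setoid (Fin n), deltaW f P Q = f P + f Q - 2 * f (P ⊓ Q)) ∧
    ((∀ P Q : Setoid (Fin n), f (P ⊔ Q) + f (P ⊓ Q) ≤ f P + f Q) →
      ∀ P Q : Setoid (Fin n), deltaW f P Q = 2 * f (P ⊔ Q) - f P - f Q) := by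
  have hf : Monotone f := StrictMono.monotone fun P Q => hmono P Q
  refine ⟨fun hsup P Q => ?_, fun hsub P Q => ?_⟩
  · obtain ⟨W₁, hW₁⟩ := exists_walk_walkWeight_eq_sub hf (inf_le_left : P ⊓ Q ≤ P)
    obtain ⟨W₂, hW₂⟩ := exists_walk_walkWeight_eq_sub hf (inf_le_right : P ⊓ Q ≤ Q)
    have key := deltaW_eq_of_walkWeight_eq (g := fun R => f R - 2 * f (R ⊓ Q))
      (fun _ _ => hf.abs_sub_two_mul_inf_le_of_supermodular hsup Q) (W₁.append W₂.reverse)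
      (by simp only [walkWeight_append, walkWeight_reverse, hW₁, hW₂, inf_idem]; ring)
    rw [key, inf_idem]
    ring
  · obtain ⟨W₁, hW₁⟩ := exists_walk_walkWeight_eq_sub hf (le_sup_left : P ≤ P ⊔ Q)
    obtain ⟨W₂, hW₂⟩ := exists_walk_walkWeight_eq_sub hf (le_sup_right : Q ≤ P ⊔ Q)
    have key := deltaW_eq_of_walkWeight_eq (g := fun R => 2 * f (R ⊔ Q) - f R)
      (fun _ _ => hf.abs_two_mul_sup_sub_le_of_submodular hsub Q) (W₁.reverse.append W₂)
      (by simp only [walkWeight_append, walkWeight_reverse, hW₁, hW₂, sup_idem]; ring)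
    rw [key, sup_idem]
    ring

/-- For a symmetric, strictly order-preserving partition function `f`:
if `f` is supermodular then `δ_f(P,Q) = f(P) + f(Q) - 2 f(P ⊓ Q)`;
if `f` is submodular then `δ_f(P,Q) = 2 f(P ⊔ Q) - f(P) - f(Q)`. -/
theorem deltaW_of_order_preserving (n : ℕ) (f : Setoid (Fin n) → ℝ)
    (hsymm : ∀ (π : Equiv.Perm (Fin n)) (P : Setoid (Fin n)), f (Setoid.comap π P) = f P)
    (hmono : ∀ P Q : Setoid (Fin n), P < Q → f P < f Q) :
    ((∀ P Q : Setoid (Fin n), f P + f Q ≤ f (P ⊔ Q) + f (P ⊓ Q)) →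
      ∀ P Q : Setoid (Fin n), deltaW f P Q = f P + f Q - 2 * f (P ⊓ Q)) ∧
    ((∀ P Q : Setoid (Fin n), f (P ⊔ Q) + f (P ⊓ Q) ≤ f P + f Q) →
      ∀ P Q : Setoid (Fin n), deltaW f P Q = 2 * f (P ⊔ Q) - f P - f Q) :=
  deltaW_of_order_preserving_general n f hmono
end

section
/- Let n ≥ 1, m ≥ 1 and let x : Fin n → Fin m → ℝ be a membership matrix, i.e. x i l ≥ 0 for all i, l and ∑_{l} x i l = 1 for every i. Define η(x) on unordered pairs of distinct elements by η(x)_{ij} = ∑_{l} (x i l)·(x j l). Then: (i) if every entry x i l lies in {0,1}, then η(x) = I_P for some partition P of Fin n; and (ii) in general, η(x) lies in the convex hull (in the real vector space of functions on unordered pairs of distinct elements of Fin n) of the set of indicator vectors {I_P : P a partition of Fin n}. -/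
open scoped BigOperators


/-- The indicator vector `I_P` of a partition `P`, as a point of the real
vector space of functions from unordered pairs of distinct elements of
`Fin n` to `ℝ`: value `1` on `P`-equivalent pairs, `0` otherwise. -/
noncomputable def indicVec (n : ℕ) (P : Setoid (Fin n)) :
    {e : Sym2 (Fin n) // ¬ e.IsDiag} → ℝ := by
  classical
  exact fun e =>
    Sym2.lift ⟨fun i j => if P.r i j then (1 : ℝ) else 0, fun i j =>
      if_congr ⟨fun h => P.iseqv.symm h, fun h => P.iseqv.symm h⟩ rfl rfl⟩ e.1

/-- The map `η` sending a membership matrix `x` to the point whose value on an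
unordered pair `{i,j}` of distinct elements is `∑_l x i l · x j l`. -/
noncomputable def etaMap (n m : ℕ) (x : Fin n → Fin m → ℝ) :
    {e : Sym2 (Fin n) // ¬ e.IsDiag} → ℝ := fun e =>
  Sym2.lift ⟨fun i j => ∑ l, x i l * x j l, fun i j =>
    Finset.sum_congr rfl (fun l _ => mul_comm (x i l) (x j l))⟩ e.1

/-!
Read the rows of `x` as independent probability distributions on the labels `Fin m`, and let
`g : Fin n → Fin m` be the resulting random labelling. For `i ≠ j` the probability that `g i = g j`
is `∑ l, x i l * x j l`, so `η(x)` is the expectation of `I_{ker g}`: a convex combination of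
indicator vectors of partitions. When `x` is a `0`/`1` matrix the labelling is deterministic.
-/

open Finset

section ProductWeights

variable {ι κ R : Type*} [Fintype ι] [DecidableEq ι] [Fintype κ] [CommSemiring R]

theorem sum_prod_eq_one (x : ι → κ → R) (hx : ∀ k, ∑ c, x k c = 1) :
    ∑ g : ι → κ, ∏ k, x k (g k) = 1 := by
  rw [← Fintype.prod_sum]
  simp [hx]

variable [DecidableEq κ]

theorem sum_prod_mul_prod_ite_eq (x : ι → κ → R) (hx : ∀ k, ∑ c, x k c = 1) (s : Finset ι)
    (a : ι → κ) :
    ∑ g : ι → κ, (∏ k, x k (g k)) * ∏ k ∈ s, (if g k = a k then 1 else 0) =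
      ∏ k ∈ s, x k (a k) := by
  have hfactor : ∀ k, ∑ c, x k c * (if k ∈ s then (if c = a k then 1 else 0) else 1) =
      if k ∈ s then x k (a k) else 1 := by
    intro k
    split_ifs <;> simp [hx k]
  calc _ = ∑ g : ι → κ, ∏ k, x k (g k) * (if k ∈ s then (if g k = a k then 1 else 0) else 1) := by
        simp_rw [prod_mul_distrib, prod_ite_mem_eq]
    _ = ∏ k, ∑ c, x k c * (if k ∈ s then (if c = a k then 1 else 0) else 1) := by
        rw [Fintype.prod_sum]
    _ = ∏ k ∈ s, x k (a k) := by simp_rw [hfactor, prod_ite_mem_eq]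

theorem sum_prod_mul_ite_apply_eq_apply (x : ι → κ → R) (hx : ∀ k, ∑ c, x k c = 1) {i j : ι}
    (hij : i ≠ j) :
    ∑ g : ι → κ, (∏ k, x k (g k)) * (if g i = g j then 1 else 0) = ∑ c, x i c * x j c := by
  have hsplit : ∀ g : ι → κ, (if g i = g j then (1 : R) else 0) =
      ∑ c, ∏ k ∈ {i, j}, if g k = c then 1 else 0 := by
    intro g
    simp [prod_pair hij]
  simp_rw [hsplit, mul_sum]
  rw [sum_comm]
  refine sum_congr rfl fun c _ => ?_
  rw [sum_prod_mul_prod_ite_eq x hx {i, j} (fun _ => c), prod_pair hij]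

end ProductWeights

theorem exists_eq_ite_of_sum_eq_one {κ R : Type*} [Fintype κ] [DecidableEq κ] [Ring R]
    [PartialOrder R] [IsOrderedRing R] [Nontrivial R] (v : κ → R)
    (h01 : ∀ l, v l = 0 ∨ v l = 1) (hv : ∑ l, v l = 1) :
    ∃ a, v = fun l => if a = l then 1 else 0 := by
  obtain ⟨a, ha⟩ : ∃ a, v a = 1 := by
    by_contra! hne
    have hzero : ∑ l, v l = 0 := sum_eq_zero fun l _ => (h01 l).resolve_right (hne l)
    exact zero_ne_one (hzero.symm.trans hv)
  have hrest : ∑ l ∈ univ.erase a, v l = 0 := by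
    rw [← add_sum_erase _ _ (mem_univ a), ha] at hv
    simpa using hv
  refine ⟨a, funext fun l => ?_⟩
  split_ifs with hal
  · rw [← hal, ha]
  · exact (sum_eq_zero_iff_of_nonneg (fun c _ => (h01 c).elim (·.ge) (· ▸ zero_le_one))).mp
      hrest l (mem_erase.mpr ⟨Ne.symm hal, mem_univ l⟩)

section Partitions

variable {n m : ℕ}

theorem etaMap_mk (x : Fin n → Fin m → ℝ) (i j : Fin n) (h : ¬ s(i, j).IsDiag) :
    etaMap n m x ⟨s(i, j), h⟩ = ∑ l, x i l * x j l := rfl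

theorem indicVec_ker_mk {α : Type*} [DecidableEq α] (f : Fin n → α) (i j : Fin n)
    (h : ¬ s(i, j).IsDiag) :
    indicVec n (Setoid.ker f) ⟨s(i, j), h⟩ = if f i = f j then 1 else 0 := by
  simp only [indicVec, Sym2.lift_mk, Setoid.ker_def]

theorem etaMap_ite_eq_indicVec_ker (f : Fin n → Fin m) :
    etaMap n m (fun k l => if f k = l then 1 else 0) = indicVec n (Setoid.ker f) := by
  ext ⟨e, he⟩
  induction e using Sym2.ind with
  | _ i j => simp [etaMap_mk, indicVec_ker_mk]

theorem etaMap_eq_sum_smul_indicVec_ker (x : Fin n → Fin m → ℝ) (hx : ∀ k, ∑ l, x k l = 1) :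
    etaMap n m x = ∑ g : Fin n → Fin m, (∏ k, x k (g k)) • indicVec n (Setoid.ker g) := by
  ext ⟨e, he⟩
  induction e using Sym2.ind with
  | _ i j =>
    rw [etaMap_mk, Finset.sum_apply]
    simp only [Pi.smul_apply, indicVec_ker_mk, smul_eq_mul]
    exact (sum_prod_mul_ite_apply_eq_apply x hx (by simpa using he)).symm

end Partitions

theorem etaMap_mem_partition_polytope_general (n m : ℕ)
    (x : Fin n → Fin m → ℝ) (hx0 : ∀ i l, 0 ≤ x i l) (hx1 : ∀ i, ∑ l, x i l = 1) :
    ((∀ i l, x i l = 0 ∨ x i l = 1) → ∃ P : Setoid (Fin n), etaMap n m x = indicVec n P) ∧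
    etaMap n m x ∈ convexHull ℝ
      {v : {e : Sym2 (Fin n) // ¬ e.IsDiag} → ℝ | ∃ P : Setoid (Fin n), v = indicVec n P} := by
  refine ⟨fun hx01 => ?_, ?_⟩
  · choose f hf using fun k => exists_eq_ite_of_sum_eq_one (x k) (hx01 k) (hx1 k)
    obtain rfl : x = fun k l => if f k = l then 1 else 0 := funext hf
    exact ⟨Setoid.ker f, etaMap_ite_eq_indicVec_ker f⟩
  · rw [etaMap_eq_sum_smul_indicVec_ker x hx1]
    exact (convex_convexHull ℝ _).sum_mem (fun g _ => prod_nonneg fun k _ => hx0 k (g k))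
      (sum_prod_eq_one x hx1) fun g _ => subset_convexHull ℝ _ ⟨Setoid.ker g, rfl⟩

/-- For a membership matrix `x` (nonnegative entries, rows summing to `1`):
(i) if all entries are `0` or `1`, then `η(x)` is the indicator vector of a
partition; (ii) in general `η(x)` lies in the convex hull of the indicator
vectors of partitions. -/
theorem etaMap_mem_partition_polytope (n m : ℕ) (hn : 1 ≤ n) (hm : 1 ≤ m)
    (x : Fin n → Fin m → ℝ) (hx0 : ∀ i l, 0 ≤ x i l) (hx1 : ∀ i, ∑ l, x i l = 1) :
    ((∀ i l, x i l = 0 ∨ x i l = 1) → ∃ P : Setoid (Fin n), etaMap n m x = indicVec n P) ∧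
    etaMap n m x ∈ convexHull ℝ
      {v : {e : Sym2 (Fin n) // ¬ e.IsDiag} → ℝ | ∃ P : Setoid (Fin n), v = indicVec n P} :=
  etaMap_mem_partition_polytope_general n m x hx0 hx1
end
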